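/- arXiv:2412.18800 — 3 statements merged into one kernel-verified Lean document; each statement's English description precedes it below -/
import Mathlib

section
/- For a rank-one positive score matrix a_{ij} = b_i * c_j, after removing the row i* of the largest b and column j* of the largest c, the restriction of any optimal matching containing the pair (i*, j*) to the remaining indices is an optimal matching of the reduced (N−1)×(N−1) problem. -/
/-- For a rank-one positive score matrix `a i j = b i * c j`, if `σ` is an
optimal matching with `σ i* = j*` (`i*` an argmax of `b`, `j*` an argmax of `c`), then
the restriction of `σ` to the remaining indices is optimal for the reduced problem:
it beats every matching of the reduced problem (equivalently, every permutation `π`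
sending `i*` to `j*`) on the sum over indices other than `i*`. -/
theorem stmt_3 (N : ℕ) (hN : 2 ≤ N) (b c : Fin N → ℝ)
    (hb : ∀ i, 0 < b i) (hc : ∀ j, 0 < c j)
    (istar jstar : Fin N)
    (hi : ∀ i, b i ≤ b istar) (hj : ∀ j, c j ≤ c jstar)
    (σ : Equiv.Perm (Fin N))
    (hσopt : ∀ π : Equiv.Perm (Fin N), ∑ i, b i * c (π i) ≤ ∑ i, b i * c (σ i))
    (hσstar : σ istar = jstar) :
    ∀ π : Equiv.Perm (Fin N), π istar = jstar →
      ∑ i ∈ Finset.univ.erase istar, b i * c (π i) ≤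
        ∑ i ∈ Finset.univ.erase istar, b i * c (σ i) := by
  intro π hπ
  have h := hσopt π
  rw [← Finset.sum_erase_add _ _ (Finset.mem_univ istar),
      ← Finset.sum_erase_add _ _ (Finset.mem_univ istar), hπ, hσstar] at h
  linarith
end

section
/- If the N×N matrix a has rank one with positive entries (a_{ij} = b_i c_j, b_i, c_j > 0), then the assignment problem max_σ ∑_i a_{i,σ(i)} is solved by the greedy algorithm that iteratively picks the largest remaining entry of a and deletes its row and column, and the greedy solution value equals the Hungarian-algorithm optimum. -/
/-- For a rank-one positive matrix `a i j = b i * c j`, the greedy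
algorithm that iteratively picks the largest remaining entry and deletes its row and
column solves the assignment problem. We encode a greedy run by a matching `g` and a
pick order `ord`: at step `k`, the pair `(ord k, g (ord k))` maximizes `a` over all
rows and columns not removed at earlier steps. The conclusion: the greedy value equals
the Hungarian optimum `max_σ ∑ i, a i (σ i)`. -/
theorem stmt_10 (N : ℕ) (hN : 1 ≤ N) (b c : Fin N → ℝ)
    (hb : ∀ i, 0 < b i) (hc : ∀ j, 0 < c j)
    (g ord : Equiv.Perm (Fin N))
    (hgreedy : ∀ k i j : Fin N,
      (∀ m, m < k → ord m ≠ i) → (∀ m, m < k → g (ord m) ≠ j) →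
      b i * c j ≤ b (ord k) * c (g (ord k))) :
    ∑ i, b i * c (g i) =
      Finset.univ.sup' Finset.univ_nonempty
        (fun σ : Equiv.Perm (Fin N) => ∑ i, b i * c (σ i)) := by
  have hmono : Monovary b (fun i => c (g i)) := by
    intro i j hcij
    by_contra hbij
    push_neg at hbij
    set k := ord.symm i with hk
    set l := ord.symm j with hl
    have hoi : ord k = i := ord.apply_symm_apply i
    have hoj : ord l = j := ord.apply_symm_apply j
    have hne : k ≠ l := by
      intro h
      rw [h, hoj] at hoi
      exact absurd (hoi ▸ hcij) (lt_irrefl _)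
    rcases lt_or_gt_of_ne hne with hkl | hlk
    · -- i picked first: column g j was still available at step k
      have h1 : b i * c (g j) ≤ b (ord k) * c (g (ord k)) := by
        refine hgreedy k i (g j) (fun m hm hmi => ?_) (fun m hm hmj => ?_)
        · have : m = k := ord.injective (hmi.trans hoi.symm)
          exact absurd (this ▸ hm) (lt_irrefl k)
        · have : m = l := ord.injective ((g.injective hmj).trans hoj.symm)
          exact absurd ((this ▸ hm).trans hkl) (lt_irrefl l)
      rw [hoi] at h1
      have := le_of_mul_le_mul_left (by linarith [h1] : b i * c (g j) ≤ b i * c (g i)) (hb i)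
      exact absurd hcij (not_lt_of_ge this)
    · -- j picked first: row i was still available at step l
      have h1 : b i * c (g j) ≤ b (ord l) * c (g (ord l)) := by
        refine hgreedy l i (g j) (fun m hm hmi => ?_) (fun m hm hmj => ?_)
        · have : m = k := ord.injective (hmi.trans hoi.symm)
          exact absurd ((this ▸ hm).trans hlk) (lt_irrefl k)
        · have : m = l := ord.injective ((g.injective hmj).trans hoj.symm)
          exact absurd (this ▸ hm) (lt_irrefl l)
      rw [hoj] at h1
      have := le_of_mul_le_mul_right (by linarith [h1] : b i * c (g j) ≤ b j * c (g j))
        (hc (g j))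
      exact absurd hbij (not_lt_of_ge this)
  refine le_antisymm (Finset.le_sup' (fun σ : Equiv.Perm (Fin N) => ∑ i, b i * c (σ i)) (Finset.mem_univ g))
    (Finset.sup'_le _ _ fun σ _ => ?_)
  have key := hmono.sum_smul_comp_perm_le_sum_smul (σ := σ.trans g.symm)
  simpa [smul_eq_mul, Equiv.trans_apply] using key
end

section
/- Let a_{ij} = b_i c_j with b, c : Fin N → ℝ positive. Then for every permutation σ with σ(i*) ≠ j* (where i* maximizes b and j* maximizes c), there exists a permutation σ' with σ'(i*) = j* and ∑_i a_{i,σ'(i)} ≥ ∑_i a_{i,σ(i)}. -/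
/-- For `a i j = b i * c j` with `b, c` positive, for every permutation
`σ` with `σ i* ≠ j*` (`i*` an argmax of `b`, `j*` an argmax of `c`), there exists a
permutation `σ'` with `σ' i* = j*` whose score is at least that of `σ`. -/
theorem stmt_12 (N : ℕ) (hN : 1 ≤ N) (b c : Fin N → ℝ)
    (hb : ∀ i, 0 < b i) (hc : ∀ j, 0 < c j)
    (istar jstar : Fin N)
    (hi : ∀ i, b i ≤ b istar) (hj : ∀ j, c j ≤ c jstar)
    (σ : Equiv.Perm (Fin N)) (hσ : σ istar ≠ jstar) :
    ∃ σ' : Equiv.Perm (Fin N), σ' istar = jstar ∧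
      ∑ i, b i * c (σ i) ≤ ∑ i, b i * c (σ' i) := by
  classical
  set k := σ.symm jstar with hk
  have hσk : σ k = jstar := σ.apply_symm_apply jstar
  have hki : k ≠ istar := by
    intro h; apply hσ; rw [← h]; exact hσk
  set τ := σ.trans (Equiv.swap (σ istar) jstar) with hτ
  have hτi : τ istar = jstar := by simp [hτ, Equiv.swap_apply_left]
  have hτk : τ k = σ istar := by simp [hτ, hσk, Equiv.swap_apply_right]
  refine ⟨τ, hτi, ?_⟩
  have split : ∀ f : Fin N → ℝ, ∑ i, f i =
      f istar + f k + ∑ i ∈ (Finset.univ.erase istar).erase k, f i := by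
    intro f
    rw [← Finset.add_sum_erase _ f (Finset.mem_univ istar),
        ← Finset.add_sum_erase _ f (Finset.mem_erase.mpr ⟨hki, Finset.mem_univ k⟩)]
    ring
  rw [split (fun i => b i * c (σ i)), split (fun i => b i * c (τ i))]
  have hrest : ∀ i ∈ (Finset.univ.erase istar).erase k,
      b i * c (σ i) = b i * c (τ i) := by
    intro i hi'
    simp only [Finset.mem_erase] at hi'
    have h1 : σ i ≠ σ istar := fun h => hi'.2.1 (σ.injective h)
    have h2 : σ i ≠ jstar := fun h => hi'.1 (by rw [← hσk] at h; exact σ.injective h)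
    simp [hτ, Equiv.swap_apply_of_ne_of_ne h1 h2]
  rw [Finset.sum_congr rfl hrest]
  simp only [hτi, hτk]
  rw [hσk]
  have key : 0 ≤ (b istar - b k) * (c jstar - c (σ istar)) :=
    mul_nonneg (by linarith [hi k]) (by linarith [hj (σ istar)])
  nlinarith [key]
end
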